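/- Let λ > 0, T > 0, let Q(x) = 2√2/(e^x + e^{-x}), and suppose u : [0,T] × ℝ² → ℂ, n : [0,T] × ℝ² → ℝ and v : [0,T] × ℝ² → ℝ² are smooth (C² in all variables) and there is a compact set K ⊂ ℝ² such that u(t,·), n(t,·), v(t,·) are supported in K for all t ∈ [0,T]. Assume that on [0,T] × ℝ² they satisfy the system: i ∂ₜu + Δu - u = n u + Q n - Q² u, ∂ₜ n = λ² ∇·v, and ∂ₜ v - ∇n = ∇(|u|²) + 2 ∇(Q Re u), where Q is regarded as a function of the first spatial variable. Then the energy E(t) = ∫_{ℝ²} ( |∇u|² + |u|² + n²/2 + λ²|v|²/2 - Q²|u|² + n(|u|² + 2 Q Re u) ) dx dy is constant on [0,T]: E(t) = E(0) for all t ∈ [0,T]. -/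

import Mathlib

open MeasureTheory

open Set

/-- The line soliton profile `Q(x) = 2√2 / (eˣ + e⁻ˣ)`. -/
noncomputable def Q (x : ℝ) : ℝ := 2 * Real.sqrt 2 / (Real.exp x + Real.exp (-x))

namespace ZakhTool
variable {E F' : Type*} [NormedAddCommGroup E] [NormedSpace ℝ E]
  [NormedAddCommGroup F'] [NormedSpace ℝ F']

noncomputable def D (w : ℝ × ℝ × ℝ) (f : ℝ × ℝ × ℝ → E) (p : ℝ × ℝ × ℝ) : E :=
  fderiv ℝ f p w

lemma hasDerivAt_T {f : ℝ × ℝ × ℝ → E} {t x y : ℝ} (hf : DifferentiableAt ℝ f (t, x, y)) :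
    HasDerivAt (fun s => f (s, x, y)) (D (1,0,0) f (t,x,y)) t := by
  have h1 : HasDerivAt (fun s : ℝ => ((s, x, y) : ℝ × ℝ × ℝ)) (1, 0, 0) t :=
    (hasDerivAt_id t).prodMk (hasDerivAt_const t (x, y))
  exact hf.hasFDerivAt.comp_hasDerivAt t h1

lemma hasDerivAt_X {f : ℝ × ℝ × ℝ → E} {t x y : ℝ} (hf : DifferentiableAt ℝ f (t, x, y)) :
    HasDerivAt (fun a => f (t, a, y)) (D (0,1,0) f (t,x,y)) x := by
  have h1 : HasDerivAt (fun a : ℝ => ((t, a, y) : ℝ × ℝ × ℝ)) (0, 1, 0) x :=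
    (hasDerivAt_const x t).prodMk ((hasDerivAt_id x).prodMk (hasDerivAt_const x y))
  exact hf.hasFDerivAt.comp_hasDerivAt x h1

lemma hasDerivAt_Y {f : ℝ × ℝ × ℝ → E} {t x y : ℝ} (hf : DifferentiableAt ℝ f (t, x, y)) :
    HasDerivAt (fun b => f (t, x, b)) (D (0,0,1) f (t,x,y)) y := by
  have h1 : HasDerivAt (fun b : ℝ => ((t, x, b) : ℝ × ℝ × ℝ)) (0, 0, 1) y :=
    (hasDerivAt_const y t).prodMk ((hasDerivAt_const y x).prodMk (hasDerivAt_id y))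
  exact hf.hasFDerivAt.comp_hasDerivAt y h1

lemma contDiff_D {f : ℝ × ℝ × ℝ → E} (hf : ContDiff ℝ 2 f) (w : ℝ × ℝ × ℝ) :
    ContDiff ℝ 1 (D w f) :=
  (hf.fderiv_right (le_refl _)).clm_apply contDiff_const

lemma D_swap {f : ℝ × ℝ × ℝ → E} (hf : ContDiff ℝ 2 f) (w w' : ℝ × ℝ × ℝ) (p : ℝ × ℝ × ℝ) :
    D w' (D w f) p = D w (D w' f) p := by
  have hsymm : IsSymmSndFDerivAt ℝ f p := (hf.contDiffAt).isSymmSndFDerivAt (by simp [minSmoothness_of_isRCLikeNormedField])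
  have hd : DifferentiableAt ℝ (fderiv ℝ f) p :=
    ((hf.fderiv_right (m := 1) (le_refl _)).differentiable one_ne_zero).differentiableAt
  have key : ∀ v : ℝ × ℝ × ℝ, fderiv ℝ (fun q => fderiv ℝ f q v) p
      = (fderiv ℝ (fderiv ℝ f) p).flip v := by
    intro v
    have := fderiv_clm_apply (c := fderiv ℝ f) (u := fun _ => v) hd (differentiableAt_const v)
    simp only [fderiv_const_apply, Pi.zero_apply, ContinuousLinearMap.comp_zero, zero_add] at this
    exact this
  show fderiv ℝ (fun q => fderiv ℝ f q w) p w' = fderiv ℝ (fun q => fderiv ℝ f q w') p w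
  rw [key w, key w']
  exact hsymm w' w

lemma D_comp_clm (L : E →L[ℝ] F') {f : ℝ × ℝ × ℝ → E} (hf : Differentiable ℝ f)
    (w p : ℝ × ℝ × ℝ) : D w (fun q => L (f q)) p = L (D w f p) := by
  have : fderiv ℝ (fun q => L (f q)) p = L.comp (fderiv ℝ f p) :=
    (L.hasFDerivAt.comp p (hf p).hasFDerivAt).fderiv
  simp [D, this]

lemma hasDerivAt_X2 {f : ℝ × ℝ → E} {x y : ℝ} (hf : DifferentiableAt ℝ f (x, y)) :
    HasDerivAt (fun a => f (a, y)) (fderiv ℝ f (x, y) (1, 0)) x := by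
  have h1 : HasDerivAt (fun a : ℝ => ((a, y) : ℝ × ℝ)) (1, 0) x :=
    (hasDerivAt_id x).prodMk (hasDerivAt_const x y)
  exact hf.hasFDerivAt.comp_hasDerivAt x h1

lemma hasDerivAt_Y2 {f : ℝ × ℝ → E} {x y : ℝ} (hf : DifferentiableAt ℝ f (x, y)) :
    HasDerivAt (fun b => f (x, b)) (fderiv ℝ f (x, y) (0, 1)) y := by
  have h1 : HasDerivAt (fun b : ℝ => ((x, b) : ℝ × ℝ)) (0, 1) y :=
    (hasDerivAt_const y x).prodMk (hasDerivAt_id y)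
  exact hf.hasFDerivAt.comp_hasDerivAt y h1

lemma integral_deriv_eq_zero' {g : ℝ → ℝ} (hg : ContDiff ℝ 1 g) (hsupp : HasCompactSupport g) :
    ∫ x, deriv g x = 0 := by
  have hint : Integrable (deriv g) :=
    (hg.continuous_deriv le_rfl).integrable_of_hasCompactSupport hsupp.deriv
  have h1 := hsupp.integral_Iic_deriv_eq hg 0
  have h2 := hsupp.integral_Ioi_deriv_eq hg 0
  have := intervalIntegral.integral_Iic_add_Ioi (b := (0:ℝ)) hint.integrableOn hint.integrableOn
  rw [← this, h1, h2]; ring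

/-- Integral over ℝ² of a planar divergence of C¹ fields vanishing off a compact set is zero. -/
lemma integral_div2_eq_zero {A B : ℝ × ℝ → ℝ} {K : Set (ℝ × ℝ)} (hK : IsCompact K)
    (hA : ContDiff ℝ 1 A) (hB : ContDiff ℝ 1 B)
    (hA0 : ∀ p ∉ K, A p = 0) (hB0 : ∀ p ∉ K, B p = 0) :
    ∫ p : ℝ × ℝ, (fderiv ℝ A p (1, 0) + fderiv ℝ B p (0, 1)) = 0 := by
  have hdiff : ∀ {C : ℝ × ℝ → ℝ}, ContDiff ℝ 1 C → ∀ w : ℝ × ℝ,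
      Continuous fun p : ℝ × ℝ => fderiv ℝ C p w := by
    intro C hC w
    exact (hC.continuous_fderiv one_ne_zero).clm_apply continuous_const
  have hzero : ∀ {C : ℝ × ℝ → ℝ}, (∀ p ∉ K, C p = 0) → ∀ p ∉ K, ∀ w : ℝ × ℝ,
      fderiv ℝ C p w = 0 := by
    intro C hC0 p hp w
    have hev : C =ᶠ[nhds p] (fun _ => (0:ℝ)) := by
      filter_upwards [hK.isClosed.isOpen_compl.mem_nhds hp] with q hq using hC0 q hq
    rw [hev.fderiv_eq]; simp
  have hsuppA : HasCompactSupport fun p : ℝ × ℝ => fderiv ℝ A p (1,0) :=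
    HasCompactSupport.intro hK (fun p hp => hzero hA0 p hp _)
  have hsuppB : HasCompactSupport fun p : ℝ × ℝ => fderiv ℝ B p (0,1) :=
    HasCompactSupport.intro hK (fun p hp => hzero hB0 p hp _)
  have hintA : Integrable fun p : ℝ × ℝ => fderiv ℝ A p (1,0) :=
    (hdiff hA _).integrable_of_hasCompactSupport hsuppA
  have hintB : Integrable fun p : ℝ × ℝ => fderiv ℝ B p (0,1) :=
    (hdiff hB _).integrable_of_hasCompactSupport hsuppB
  rw [integral_add hintA hintB]
  have hAzero : ∫ p : ℝ × ℝ, fderiv ℝ A p (1,0) = 0 := by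
    rw [show (volume : Measure (ℝ × ℝ)) = volume.prod volume from (Measure.volume_eq_prod _ _).symm]
      at hintA ⊢
    rw [integral_prod_symm _ hintA]
    have : ∀ y : ℝ, ∫ x : ℝ, fderiv ℝ A (x, y) (1, 0) = 0 := by
      intro y
      have hg : ContDiff ℝ 1 (fun x => A (x, y)) :=
        hA.comp (contDiff_id.prodMk contDiff_const)
      have hgs : HasCompactSupport (fun x => A (x, y)) := by
        apply HasCompactSupport.intro (hK.image continuous_fst)
        intro x hx
        refine hA0 _ fun hmem => hx ?_
        exact ⟨(x, y), hmem, rfl⟩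
      have hder : ∀ x : ℝ, deriv (fun x' => A (x', y)) x = fderiv ℝ A (x, y) (1, 0) := by
        intro x
        exact (hasDerivAt_X2 (hA.differentiable one_ne_zero (x, y))).deriv
      calc ∫ x : ℝ, fderiv ℝ A (x, y) (1, 0)
          = ∫ x : ℝ, deriv (fun x' => A (x', y)) x :=
            integral_congr_ae (Filter.Eventually.of_forall fun x => (hder x).symm)
        _ = 0 := integral_deriv_eq_zero' hg hgs
    simp [this]
  have hBzero : ∫ p : ℝ × ℝ, fderiv ℝ B p (0,1) = 0 := by
    rw [show (volume : Measure (ℝ × ℝ)) = volume.prod volume from (Measure.volume_eq_prod _ _).symm]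
      at hintB ⊢
    rw [integral_prod _ hintB]
    have : ∀ x : ℝ, ∫ y : ℝ, fderiv ℝ B (x, y) (0, 1) = 0 := by
      intro x
      have hg : ContDiff ℝ 1 (fun y => B (x, y)) :=
        hB.comp (contDiff_const.prodMk contDiff_id)
      have hgs : HasCompactSupport (fun y => B (x, y)) := by
        apply HasCompactSupport.intro (hK.image continuous_snd)
        intro y hy
        refine hB0 _ fun hmem => hy ?_
        exact ⟨(x, y), hmem, rfl⟩
      have hder : ∀ y : ℝ, deriv (fun y' => B (x, y')) y = fderiv ℝ B (x, y) (0, 1) := by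
        intro y
        exact (hasDerivAt_Y2 (hB.differentiable one_ne_zero (x, y))).deriv
      calc ∫ y : ℝ, fderiv ℝ B (x, y) (0, 1)
          = ∫ y : ℝ, deriv (fun y' => B (x, y')) y :=
            integral_congr_ae (Filter.Eventually.of_forall fun y => (hder y).symm)
        _ = 0 := integral_deriv_eq_zero' hg hgs
    simp [this]
  rw [hAzero, hBzero]; ring

lemma const_of_hasDerivAt_zero {f : ℝ → ℝ} {a b : ℝ}
    (h : ∀ t ∈ Ioo a b, HasDerivAt f 0 t) :
    ∀ s ∈ Ioo a b, ∀ t ∈ Ioo a b, f s = f t := by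
  intro s hs t ht
  refine (convex_Ioo a b).is_const_of_fderivWithin_eq_zero (𝕜 := ℝ)
    (fun z hz => ((h z hz).differentiableAt.differentiableWithinAt)) ?_ hs ht
  intro z hz
  rw [fderivWithin_of_isOpen isOpen_Ioo hz, (h z hz).hasFDerivAt.fderiv]
  ext; simp

end ZakhTool

namespace ZakhAux
open ZakhTool

lemma contDiff_Q : ContDiff ℝ 1 Q := by
  apply ContDiff.div contDiff_const
  · exact Real.contDiff_exp.add (Real.contDiff_exp.comp contDiff_neg)
  · intro x; positivity

variable (lam : ℝ) (a b nn w1 w2 : ℝ × ℝ × ℝ → ℝ)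

noncomputable def F3 : ℝ × ℝ × ℝ → ℝ := fun p =>
  (D (0,1,0) a p)^2 + (D (0,1,0) b p)^2 + (D (0,0,1) a p)^2 + (D (0,0,1) b p)^2
  + (a p)^2 + (b p)^2 + (nn p)^2/2 + lam^2*((w1 p)^2+(w2 p)^2)/2
  - (Q p.2.1)^2*((a p)^2+(b p)^2) + nn p*((a p)^2+(b p)^2+2*Q p.2.1*a p)

noncomputable def G3 : ℝ × ℝ × ℝ → ℝ := fun p =>
  2*(D (0,1,0) a p * D (1,0,0) (D (0,1,0) a) p + D (0,1,0) b p * D (1,0,0) (D (0,1,0) b) p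
    + D (0,0,1) a p * D (1,0,0) (D (0,0,1) a) p + D (0,0,1) b p * D (1,0,0) (D (0,0,1) b) p)
  + 2*(a p * D (1,0,0) a p + b p * D (1,0,0) b p) + nn p * D (1,0,0) nn p
  + lam^2*(w1 p * D (1,0,0) w1 p + w2 p * D (1,0,0) w2 p)
  - (Q p.2.1)^2*(2*a p*D (1,0,0) a p + 2*b p*D (1,0,0) b p)
  + D (1,0,0) nn p*((a p)^2+(b p)^2+2*Q p.2.1*a p)
  + nn p*(2*a p*D (1,0,0) a p + 2*b p*D (1,0,0) b p + 2*Q p.2.1*D (1,0,0) a p)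

noncomputable def AF (t : ℝ) : ℝ × ℝ → ℝ := fun q =>
  2*(D (0,1,0) a (t,q) * D (1,0,0) a (t,q) + D (0,1,0) b (t,q) * D (1,0,0) b (t,q))
  + lam^2*(nn (t,q) + (a (t,q))^2 + (b (t,q))^2 + 2*Q q.1*a (t,q)) * w1 (t,q)

noncomputable def BF (t : ℝ) : ℝ × ℝ → ℝ := fun q =>
  2*(D (0,0,1) a (t,q) * D (1,0,0) a (t,q) + D (0,0,1) b (t,q) * D (1,0,0) b (t,q))
  + lam^2*(nn (t,q) + (a (t,q))^2 + (b (t,q))^2 + 2*Q q.1*a (t,q)) * w2 (t,q)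

variable {a b nn w1 w2}

lemma hasDerivAt_F3 (ha : ContDiff ℝ 2 a) (hb : ContDiff ℝ 2 b) (hn : ContDiff ℝ 2 nn)
    (hw1 : ContDiff ℝ 2 w1) (hw2 : ContDiff ℝ 2 w2) (t x y : ℝ) :
    HasDerivAt (fun s => F3 lam a b nn w1 w2 (s,x,y)) (G3 lam a b nn w1 w2 (t,x,y)) t := by
  have hda := ha.differentiable two_ne_zero
  have hdb := hb.differentiable two_ne_zero
  have hdn := hn.differentiable two_ne_zero
  have hdw1 := hw1.differentiable two_ne_zero
  have hdw2 := hw2.differentiable two_ne_zero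
  have Ha : HasDerivAt (fun s => a (s,x,y)) (D (1,0,0) a (t,x,y)) t := hasDerivAt_T (hda _)
  have Hb : HasDerivAt (fun s => b (s,x,y)) (D (1,0,0) b (t,x,y)) t := hasDerivAt_T (hdb _)
  have Hn : HasDerivAt (fun s => nn (s,x,y)) (D (1,0,0) nn (t,x,y)) t := hasDerivAt_T (hdn _)
  have Hw1 : HasDerivAt (fun s => w1 (s,x,y)) (D (1,0,0) w1 (t,x,y)) t := hasDerivAt_T (hdw1 _)
  have Hw2 : HasDerivAt (fun s => w2 (s,x,y)) (D (1,0,0) w2 (t,x,y)) t := hasDerivAt_T (hdw2 _)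
  have Hax : HasDerivAt (fun s => D (0,1,0) a (s,x,y)) (D (1,0,0) (D (0,1,0) a) (t,x,y)) t :=
    hasDerivAt_T (((contDiff_D ha _).differentiable one_ne_zero) _)
  have Hbx : HasDerivAt (fun s => D (0,1,0) b (s,x,y)) (D (1,0,0) (D (0,1,0) b) (t,x,y)) t :=
    hasDerivAt_T (((contDiff_D hb _).differentiable one_ne_zero) _)
  have Hay : HasDerivAt (fun s => D (0,0,1) a (s,x,y)) (D (1,0,0) (D (0,0,1) a) (t,x,y)) t :=
    hasDerivAt_T (((contDiff_D ha _).differentiable one_ne_zero) _)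
  have Hby : HasDerivAt (fun s => D (0,0,1) b (s,x,y)) (D (1,0,0) (D (0,0,1) b) (t,x,y)) t :=
    hasDerivAt_T (((contDiff_D hb _).differentiable one_ne_zero) _)
  have H1 := ((((((Hax.pow 2).add (Hbx.pow 2)).add (Hay.pow 2)).add (Hby.pow 2)).add
      (Ha.pow 2)).add (Hb.pow 2)).add ((Hn.pow 2).div_const 2)
  have H2 := H1.add ((((Hw1.pow 2).add (Hw2.pow 2)).const_mul (lam^2)).div_const 2)
  have H3 := H2.sub (((Ha.pow 2).add (Hb.pow 2)).const_mul ((Q x)^2))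
  have H := H3.add (Hn.mul (((Ha.pow 2).add (Hb.pow 2)).add (Ha.const_mul (2*Q x))))
  refine H.congr_deriv ?_
  simp only [G3]
  norm_num
  ring


lemma G_eq_div (ha : ContDiff ℝ 2 a) (hb : ContDiff ℝ 2 b) (hn : ContDiff ℝ 2 nn)
    (hw1 : ContDiff ℝ 2 w1) (hw2 : ContDiff ℝ 2 w2) (t x y qd : ℝ)
    (hQ' : HasDerivAt Q qd x)
    (hAF : DifferentiableAt ℝ (AF lam a b nn w1 t) (x,y))
    (hBF : DifferentiableAt ℝ (BF lam a b nn w2 t) (x,y))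
    (EA : - D (1,0,0) b (t,x,y) + (D (0,1,0) (D (0,1,0) a) (t,x,y) + D (0,0,1) (D (0,0,1) a) (t,x,y))
        - a (t,x,y) = nn (t,x,y) * a (t,x,y) + Q x * nn (t,x,y) - (Q x)^2 * a (t,x,y))
    (EB : D (1,0,0) a (t,x,y) + (D (0,1,0) (D (0,1,0) b) (t,x,y) + D (0,0,1) (D (0,0,1) b) (t,x,y))
        - b (t,x,y) = nn (t,x,y) * b (t,x,y) - (Q x)^2 * b (t,x,y))
    (E2 : D (1,0,0) nn (t,x,y) = lam^2 * (D (0,1,0) w1 (t,x,y) + D (0,0,1) w2 (t,x,y)))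
    (E3a : D (1,0,0) w1 (t,x,y) - D (0,1,0) nn (t,x,y)
        = (2*a (t,x,y)*D (0,1,0) a (t,x,y) + 2*b (t,x,y)*D (0,1,0) b (t,x,y))
          + 2*(qd*a (t,x,y) + Q x*D (0,1,0) a (t,x,y)))
    (E3b : D (1,0,0) w2 (t,x,y) - D (0,0,1) nn (t,x,y)
        = (2*a (t,x,y)*D (0,0,1) a (t,x,y) + 2*b (t,x,y)*D (0,0,1) b (t,x,y))
          + 2*(Q x*D (0,0,1) a (t,x,y))) :
    G3 lam a b nn w1 w2 (t,x,y)
      = fderiv ℝ (AF lam a b nn w1 t) (x,y) (1,0)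
        + fderiv ℝ (BF lam a b nn w2 t) (x,y) (0,1) := by
  have hda := ha.differentiable two_ne_zero
  have hdb := hb.differentiable two_ne_zero
  have hdn := hn.differentiable two_ne_zero
  have hdw1 := hw1.differentiable two_ne_zero
  have hdw2 := hw2.differentiable two_ne_zero
  -- x-direction atoms
  have Xa : HasDerivAt (fun x' => a (t,x',y)) (D (0,1,0) a (t,x,y)) x := hasDerivAt_X (hda _)
  have Xb : HasDerivAt (fun x' => b (t,x',y)) (D (0,1,0) b (t,x,y)) x := hasDerivAt_X (hdb _)
  have Xn : HasDerivAt (fun x' => nn (t,x',y)) (D (0,1,0) nn (t,x,y)) x := hasDerivAt_X (hdn _)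
  have Xw1 : HasDerivAt (fun x' => w1 (t,x',y)) (D (0,1,0) w1 (t,x,y)) x := hasDerivAt_X (hdw1 _)
  have Xax : HasDerivAt (fun x' => D (0,1,0) a (t,x',y)) (D (0,1,0) (D (0,1,0) a) (t,x,y)) x :=
    hasDerivAt_X (((contDiff_D ha _).differentiable one_ne_zero) _)
  have Xbx : HasDerivAt (fun x' => D (0,1,0) b (t,x',y)) (D (0,1,0) (D (0,1,0) b) (t,x,y)) x :=
    hasDerivAt_X (((contDiff_D hb _).differentiable one_ne_zero) _)
  have Xat : HasDerivAt (fun x' => D (1,0,0) a (t,x',y)) (D (0,1,0) (D (1,0,0) a) (t,x,y)) x :=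
    hasDerivAt_X (((contDiff_D ha _).differentiable one_ne_zero) _)
  have Xbt : HasDerivAt (fun x' => D (1,0,0) b (t,x',y)) (D (0,1,0) (D (1,0,0) b) (t,x,y)) x :=
    hasDerivAt_X (((contDiff_D hb _).differentiable one_ne_zero) _)
  -- y-direction atoms
  have Ya : HasDerivAt (fun y' => a (t,x,y')) (D (0,0,1) a (t,x,y)) y := hasDerivAt_Y (hda _)
  have Yb : HasDerivAt (fun y' => b (t,x,y')) (D (0,0,1) b (t,x,y)) y := hasDerivAt_Y (hdb _)
  have Yn : HasDerivAt (fun y' => nn (t,x,y')) (D (0,0,1) nn (t,x,y)) y := hasDerivAt_Y (hdn _)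
  have Yw2 : HasDerivAt (fun y' => w2 (t,x,y')) (D (0,0,1) w2 (t,x,y)) y := hasDerivAt_Y (hdw2 _)
  have Yay : HasDerivAt (fun y' => D (0,0,1) a (t,x,y')) (D (0,0,1) (D (0,0,1) a) (t,x,y)) y :=
    hasDerivAt_Y (((contDiff_D ha _).differentiable one_ne_zero) _)
  have Yby : HasDerivAt (fun y' => D (0,0,1) b (t,x,y')) (D (0,0,1) (D (0,0,1) b) (t,x,y)) y :=
    hasDerivAt_Y (((contDiff_D hb _).differentiable one_ne_zero) _)
  have Yat : HasDerivAt (fun y' => D (1,0,0) a (t,x,y')) (D (0,0,1) (D (1,0,0) a) (t,x,y)) y :=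
    hasDerivAt_Y (((contDiff_D ha _).differentiable one_ne_zero) _)
  have Ybt : HasDerivAt (fun y' => D (1,0,0) b (t,x,y')) (D (0,0,1) (D (1,0,0) b) (t,x,y)) y :=
    hasDerivAt_Y (((contDiff_D hb _).differentiable one_ne_zero) _)
  -- derivative of the x-slice of AF
  have HA : HasDerivAt (fun x' => AF lam a b nn w1 t (x',y)) _ x :=
    (((Xax.mul Xat).add (Xbx.mul Xbt)).const_mul 2).add
      ((((((Xn.add (Xa.pow 2)).add (Xb.pow 2)).add ((hQ'.const_mul 2).mul Xa)).const_mul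
        (lam^2)).mul Xw1))
  have HB : HasDerivAt (fun y' => BF lam a b nn w2 t (x,y')) _ y :=
    (((Yay.mul Yat).add (Yby.mul Ybt)).const_mul 2).add
      ((((((Yn.add (Ya.pow 2)).add (Yb.pow 2)).add ((Ya.const_mul (2*Q x)))).const_mul
        (lam^2)).mul Yw2))
  rw [← HA.unique (hasDerivAt_X2 hAF), ← HB.unique (hasDerivAt_Y2 hBF)]
  rw [D_swap ha (1,0,0) (0,1,0), D_swap hb (1,0,0) (0,1,0),
      D_swap ha (1,0,0) (0,0,1), D_swap hb (1,0,0) (0,0,1)]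
  simp only [G3]
  norm_num
  linear_combination (-2*D (1,0,0) a (t,x,y))*EA + (-2*D (1,0,0) b (t,x,y))*EB
    + (nn (t,x,y) + (a (t,x,y))^2 + (b (t,x,y))^2 + 2*Q x*a (t,x,y))*E2
    + lam^2*w1 (t,x,y)*E3a + lam^2*w2 (t,x,y)*E3b


lemma contDiff_AF (ha : ContDiff ℝ 2 a) (hb : ContDiff ℝ 2 b) (hn : ContDiff ℝ 2 nn)
    (hw1 : ContDiff ℝ 2 w1) (t : ℝ) : ContDiff ℝ 1 (AF lam a b nn w1 t) := by
  have hι : ContDiff ℝ 1 (fun q : ℝ × ℝ => ((t, q) : ℝ × ℝ × ℝ)) :=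
    contDiff_const.prodMk contDiff_id
  unfold AF
  refine ContDiff.add (contDiff_const.mul ?_) (ContDiff.mul (contDiff_const.mul ?_) ?_)
  · exact (((contDiff_D ha (0,1,0)).comp hι).mul ((contDiff_D ha (1,0,0)).comp hι)).add
      (((contDiff_D hb (0,1,0)).comp hι).mul ((contDiff_D hb (1,0,0)).comp hι))
  · exact ((((hn.of_le one_le_two).comp hι).add (((ha.of_le one_le_two).comp hι).pow 2)).add
      (((hb.of_le one_le_two).comp hι).pow 2)).add
      ((contDiff_const.mul (contDiff_Q.comp contDiff_fst)).mul ((ha.of_le one_le_two).comp hι))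
  · exact (hw1.of_le one_le_two).comp hι

lemma contDiff_BF (ha : ContDiff ℝ 2 a) (hb : ContDiff ℝ 2 b) (hn : ContDiff ℝ 2 nn)
    (hw2 : ContDiff ℝ 2 w2) (t : ℝ) : ContDiff ℝ 1 (BF lam a b nn w2 t) := by
  have hι : ContDiff ℝ 1 (fun q : ℝ × ℝ => ((t, q) : ℝ × ℝ × ℝ)) :=
    contDiff_const.prodMk contDiff_id
  unfold BF
  refine ContDiff.add (contDiff_const.mul ?_) (ContDiff.mul (contDiff_const.mul ?_) ?_)
  · exact (((contDiff_D ha (0,0,1)).comp hι).mul ((contDiff_D ha (1,0,0)).comp hι)).add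
      (((contDiff_D hb (0,0,1)).comp hι).mul ((contDiff_D hb (1,0,0)).comp hι))
  · exact ((((hn.of_le one_le_two).comp hι).add (((ha.of_le one_le_two).comp hι).pow 2)).add
      (((hb.of_le one_le_two).comp hι).pow 2)).add
      ((contDiff_const.mul (contDiff_Q.comp contDiff_fst)).mul ((ha.of_le one_le_two).comp hι))
  · exact (hw2.of_le one_le_two).comp hι

lemma continuous_DD {f : ℝ × ℝ × ℝ → ℝ} (hf : ContDiff ℝ 2 f) (w w' : ℝ × ℝ × ℝ) :
    Continuous (D w' (D w f)) :=
  ((contDiff_D hf w).continuous_fderiv one_ne_zero).clm_apply continuous_const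

lemma continuous_F3 (ha : ContDiff ℝ 2 a) (hb : ContDiff ℝ 2 b) (hn : ContDiff ℝ 2 nn)
    (hw1 : ContDiff ℝ 2 w1) (hw2 : ContDiff ℝ 2 w2) :
    Continuous (F3 lam a b nn w1 w2) := by
  have cQ : Continuous fun p : ℝ × ℝ × ℝ => Q p.2.1 :=
    contDiff_Q.continuous.comp (continuous_snd.fst)
  unfold F3
  have c1 := (contDiff_D ha (0,1,0)).continuous
  have c2 := (contDiff_D hb (0,1,0)).continuous
  have c3 := (contDiff_D ha (0,0,1)).continuous
  have c4 := (contDiff_D hb (0,0,1)).continuous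
  have c5 := ha.continuous; have c6 := hb.continuous; have c7 := hn.continuous
  have c8 := hw1.continuous; have c9 := hw2.continuous
  fun_prop

lemma continuous_G3 (ha : ContDiff ℝ 2 a) (hb : ContDiff ℝ 2 b) (hn : ContDiff ℝ 2 nn)
    (hw1 : ContDiff ℝ 2 w1) (hw2 : ContDiff ℝ 2 w2) :
    Continuous (G3 lam a b nn w1 w2) := by
  have cQ : Continuous fun p : ℝ × ℝ × ℝ => Q p.2.1 :=
    contDiff_Q.continuous.comp (continuous_snd.fst)
  unfold G3
  have c1 := (contDiff_D ha (0,1,0)).continuous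
  have c2 := (contDiff_D hb (0,1,0)).continuous
  have c3 := (contDiff_D ha (0,0,1)).continuous
  have c4 := (contDiff_D hb (0,0,1)).continuous
  have c5 := ha.continuous; have c6 := hb.continuous; have c7 := hn.continuous
  have c8 := hw1.continuous; have c9 := hw2.continuous
  have c10 := (contDiff_D ha (1,0,0)).continuous
  have c11 := (contDiff_D hb (1,0,0)).continuous
  have c12 := (contDiff_D hn (1,0,0)).continuous
  have c13 := (contDiff_D hw1 (1,0,0)).continuous
  have c14 := (contDiff_D hw2 (1,0,0)).continuous
  have c15 := continuous_DD ha (0,1,0) (1,0,0)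
  have c16 := continuous_DD hb (0,1,0) (1,0,0)
  have c17 := continuous_DD ha (0,0,1) (1,0,0)
  have c18 := continuous_DD hb (0,0,1) (1,0,0)
  fun_prop

lemma Dx_zero {f : ℝ × ℝ × ℝ → ℝ} (hf : Differentiable ℝ f) {K : Set (ℝ × ℝ)}
    (hK : IsCompact K) {t x y : ℝ} (hxy : (x,y) ∉ K)
    (h0 : ∀ x' y' : ℝ, (x',y') ∉ K → f (t,x',y') = 0) : D (0,1,0) f (t,x,y) = 0 := by
  have hKo : IsOpen {x' : ℝ | (x', y) ∉ K} :=
    hK.isClosed.isOpen_compl.preimage (continuous_id.prodMk continuous_const)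
  have hev : (fun x' => f (t,x',y)) =ᶠ[nhds x] fun _ => (0:ℝ) := by
    filter_upwards [hKo.mem_nhds hxy] with q hq using h0 q y hq
  have h1 := (hasDerivAt_X (hf (t,x,y))).deriv
  rw [← h1, hev.deriv_eq, deriv_const]

lemma Dy_zero {f : ℝ × ℝ × ℝ → ℝ} (hf : Differentiable ℝ f) {K : Set (ℝ × ℝ)}
    (hK : IsCompact K) {t x y : ℝ} (hxy : (x,y) ∉ K)
    (h0 : ∀ x' y' : ℝ, (x',y') ∉ K → f (t,x',y') = 0) : D (0,0,1) f (t,x,y) = 0 := by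
  have hKo : IsOpen {y' : ℝ | (x, y') ∉ K} :=
    hK.isClosed.isOpen_compl.preimage (continuous_const.prodMk continuous_id)
  have hev : (fun y' => f (t,x,y')) =ᶠ[nhds y] fun _ => (0:ℝ) := by
    filter_upwards [hKo.mem_nhds hxy] with q hq using h0 x q hq
  have h1 := (hasDerivAt_Y (hf (t,x,y))).deriv
  rw [← h1, hev.deriv_eq, deriv_const]


theorem main_aux (lam T : ℝ) (hT : 0 < T) {a b nn w1 w2 : ℝ × ℝ × ℝ → ℝ}
    (ha : ContDiff ℝ 2 a) (hb : ContDiff ℝ 2 b) (hn : ContDiff ℝ 2 nn)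
    (hw1 : ContDiff ℝ 2 w1) (hw2 : ContDiff ℝ 2 w2)
    (K : Set (ℝ × ℝ)) (hK : IsCompact K)
    (hsupp : ∀ t ∈ Icc (0:ℝ) T, ∀ x y : ℝ, (x,y) ∉ K →
      a (t,x,y) = 0 ∧ b (t,x,y) = 0 ∧ nn (t,x,y) = 0 ∧ w1 (t,x,y) = 0 ∧ w2 (t,x,y) = 0)
    (hEA : ∀ t ∈ Icc (0:ℝ) T, ∀ x y : ℝ,
      - D (1,0,0) b (t,x,y) + (D (0,1,0) (D (0,1,0) a) (t,x,y) + D (0,0,1) (D (0,0,1) a) (t,x,y))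
        - a (t,x,y) = nn (t,x,y) * a (t,x,y) + Q x * nn (t,x,y) - (Q x)^2 * a (t,x,y))
    (hEB : ∀ t ∈ Icc (0:ℝ) T, ∀ x y : ℝ,
      D (1,0,0) a (t,x,y) + (D (0,1,0) (D (0,1,0) b) (t,x,y) + D (0,0,1) (D (0,0,1) b) (t,x,y))
        - b (t,x,y) = nn (t,x,y) * b (t,x,y) - (Q x)^2 * b (t,x,y))
    (hE2 : ∀ t ∈ Icc (0:ℝ) T, ∀ x y : ℝ,
      D (1,0,0) nn (t,x,y) = lam^2 * (D (0,1,0) w1 (t,x,y) + D (0,0,1) w2 (t,x,y)))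
    (hE3a : ∀ t ∈ Icc (0:ℝ) T, ∀ x y : ℝ,
      D (1,0,0) w1 (t,x,y) - D (0,1,0) nn (t,x,y)
        = (2*a (t,x,y)*D (0,1,0) a (t,x,y) + 2*b (t,x,y)*D (0,1,0) b (t,x,y))
          + 2*(deriv Q x*a (t,x,y) + Q x*D (0,1,0) a (t,x,y)))
    (hE3b : ∀ t ∈ Icc (0:ℝ) T, ∀ x y : ℝ,
      D (1,0,0) w2 (t,x,y) - D (0,0,1) nn (t,x,y)
        = (2*a (t,x,y)*D (0,0,1) a (t,x,y) + 2*b (t,x,y)*D (0,0,1) b (t,x,y))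
          + 2*(Q x*D (0,0,1) a (t,x,y))) :
    ∀ t ∈ Icc (0:ℝ) T, (∫ q : ℝ × ℝ, F3 lam a b nn w1 w2 (t,q.1,q.2))
      = ∫ q : ℝ × ℝ, F3 lam a b nn w1 w2 (0,q.1,q.2) := by
  have hda := ha.differentiable two_ne_zero
  have hdb := hb.differentiable two_ne_zero
  have hdn := hn.differentiable two_ne_zero
  have hdw1 := hw1.differentiable two_ne_zero
  have hdw2 := hw2.differentiable two_ne_zero
  -- spatial derivatives vanish off K
  have hz : ∀ t ∈ Icc (0:ℝ) T, ∀ q : ℝ × ℝ, q ∉ K →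
      a (t,q.1,q.2) = 0 ∧ b (t,q.1,q.2) = 0 ∧ nn (t,q.1,q.2) = 0 ∧ w1 (t,q.1,q.2) = 0
        ∧ w2 (t,q.1,q.2) = 0
        ∧ D (0,1,0) a (t,q.1,q.2) = 0 ∧ D (0,1,0) b (t,q.1,q.2) = 0
        ∧ D (0,0,1) a (t,q.1,q.2) = 0 ∧ D (0,0,1) b (t,q.1,q.2) = 0 := by
    intro t ht q hq
    obtain ⟨h1, h2, h3, h4, h5⟩ := hsupp t ht q.1 q.2 hq
    refine ⟨h1, h2, h3, h4, h5, ?_, ?_, ?_, ?_⟩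
    · exact Dx_zero hda hK hq (fun x' y' h => (hsupp t ht x' y' h).1)
    · exact Dx_zero hdb hK hq (fun x' y' h => (hsupp t ht x' y' h).2.1)
    · exact Dy_zero hda hK hq (fun x' y' h => (hsupp t ht x' y' h).1)
    · exact Dy_zero hdb hK hq (fun x' y' h => (hsupp t ht x' y' h).2.1)
  have hF30 : ∀ t ∈ Icc (0:ℝ) T, ∀ q : ℝ × ℝ, q ∉ K → F3 lam a b nn w1 w2 (t,q.1,q.2) = 0 := by
    intro t ht q hq
    obtain ⟨h1, h2, h3, h4, h5, h6, h7, h8, h9⟩ := hz t ht q hq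
    simp only [F3, h1, h2, h3, h4, h5, h6, h7, h8, h9]
    norm_num
  have hG30 : ∀ t ∈ Icc (0:ℝ) T, ∀ q : ℝ × ℝ, q ∉ K → G3 lam a b nn w1 w2 (t,q.1,q.2) = 0 := by
    intro t ht q hq
    obtain ⟨h1, h2, h3, h4, h5, h6, h7, h8, h9⟩ := hz t ht q hq
    simp only [G3, h1, h2, h3, h4, h5, h6, h7, h8, h9]
    norm_num
  have hAF0 : ∀ t ∈ Icc (0:ℝ) T, ∀ q : ℝ × ℝ, q ∉ K → AF lam a b nn w1 t q = 0 := by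
    intro t ht q hq
    obtain ⟨h1, h2, h3, h4, h5, h6, h7, h8, h9⟩ := hz t ht q hq
    simp only [AF, h1, h2, h3, h4, h5, h6, h7, h8, h9]
    norm_num
  have hBF0 : ∀ t ∈ Icc (0:ℝ) T, ∀ q : ℝ × ℝ, q ∉ K → BF lam a b nn w2 t q = 0 := by
    intro t ht q hq
    obtain ⟨h1, h2, h3, h4, h5, h6, h7, h8, h9⟩ := hz t ht q hq
    simp only [BF, h1, h2, h3, h4, h5, h6, h7, h8, h9]
    norm_num
  have hcF : Continuous (F3 lam a b nn w1 w2) := continuous_F3 lam ha hb hn hw1 hw2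
  have hcG : Continuous (G3 lam a b nn w1 w2) := continuous_G3 lam ha hb hn hw1 hw2
  have hι : ∀ t : ℝ, Continuous fun q : ℝ × ℝ => ((t, q.1, q.2) : ℝ × ℝ × ℝ) := by
    intro t; fun_prop
  have hInt : ∀ t ∈ Icc (0:ℝ) T, Integrable (fun q : ℝ × ℝ => F3 lam a b nn w1 w2 (t,q.1,q.2)) := by
    intro t ht
    exact (hcF.comp (hι t)).integrable_of_hasCompactSupport
      (HasCompactSupport.intro hK (hF30 t ht))
  -- bound for G3 on [0,T] × K
  obtain ⟨C, hC⟩ := ((isCompact_Icc (a := (0:ℝ)) (b := T)).prod hK).exists_bound_of_continuousOn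
    (hcG.continuousOn (s := (Icc (0:ℝ) T) ×ˢ K))
  set Φ : ℝ → ℝ := fun s => ∫ q : ℝ × ℝ, F3 lam a b nn w1 w2 (s,q.1,q.2) with hΦ
  have hderiv : ∀ t ∈ Ioo (0:ℝ) T, HasDerivAt Φ 0 t := by
    intro t ht
    have hε : 0 < min t (T - t) := lt_min ht.1 (by linarith [ht.2])
    have hball : Metric.ball t (min t (T - t)) ⊆ Icc 0 T := by
      intro s hs
      rw [Real.ball_eq_Ioo] at hs
      constructor
      · have := hs.1; have h1 := min_le_left t (T - t); linarith
      · have := hs.2; have h1 := min_le_right t (T - t); linarith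
    have key := hasDerivAt_integral_of_dominated_loc_of_deriv_le (μ := volume)
      (F := fun s (q : ℝ × ℝ) => F3 lam a b nn w1 w2 (s,q.1,q.2))
      (F' := fun s (q : ℝ × ℝ) => G3 lam a b nn w1 w2 (s,q.1,q.2))
      (bound := K.indicator fun _ => |C|) (Metric.ball_mem_nhds t hε)
      (Filter.Eventually.of_forall fun s =>
        ((hcF.comp (hι s)).aestronglyMeasurable))
      (hInt t (Ioo_subset_Icc_self ht))
      ((hcG.comp (hι t)).aestronglyMeasurable)
      (Filter.Eventually.of_forall fun q => ?_)
      ?_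
      (Filter.Eventually.of_forall fun q s _ =>
        hasDerivAt_F3 lam ha hb hn hw1 hw2 s q.1 q.2)
    · have hzero : (∫ q : ℝ × ℝ, G3 lam a b nn w1 w2 (t,q.1,q.2)) = 0 := by
        have hpt : ∀ q : ℝ × ℝ, G3 lam a b nn w1 w2 (t,q.1,q.2)
            = fderiv ℝ (AF lam a b nn w1 t) q (1,0) + fderiv ℝ (BF lam a b nn w2 t) q (0,1) := by
          intro q
          have ht' := Ioo_subset_Icc_self ht
          exact G_eq_div lam ha hb hn hw1 hw2 t q.1 q.2 (deriv Q q.1)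
            ((contDiff_Q.differentiable one_ne_zero q.1).hasDerivAt)
            (((contDiff_AF lam ha hb hn hw1 t).differentiable one_ne_zero) _)
            (((contDiff_BF lam ha hb hn hw2 t).differentiable one_ne_zero) _)
            (hEA t ht' q.1 q.2) (hEB t ht' q.1 q.2) (hE2 t ht' q.1 q.2)
            (hE3a t ht' q.1 q.2) (hE3b t ht' q.1 q.2)
        calc (∫ q : ℝ × ℝ, G3 lam a b nn w1 w2 (t,q.1,q.2))
            = ∫ q : ℝ × ℝ, (fderiv ℝ (AF lam a b nn w1 t) q (1,0)
              + fderiv ℝ (BF lam a b nn w2 t) q (0,1)) :=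
              integral_congr_ae (Filter.Eventually.of_forall hpt)
          _ = 0 := integral_div2_eq_zero hK (contDiff_AF lam ha hb hn hw1 t)
              (contDiff_BF lam ha hb hn hw2 t)
              (hAF0 t (Ioo_subset_Icc_self ht)) (hBF0 t (Ioo_subset_Icc_self ht))
      rw [hΦ, ← hzero]
      exact key.2
    · -- pointwise bound
      show ∀ s ∈ Metric.ball t (min t (T - t)), ‖G3 lam a b nn w1 w2 (s,q.1,q.2)‖
        ≤ K.indicator (fun _ => |C|) q
      intro s hs
      by_cases hqK : q ∈ K
      · rw [Set.indicator_of_mem hqK]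
        have := hC (s, q) ⟨hball hs, hqK⟩
        exact this.trans (le_abs_self C)
      · rw [Set.indicator_of_notMem hqK, hG30 s (hball hs) q hqK]
        simp
    · -- bound integrable
      exact (integrableOn_const hK.measure_lt_top.ne).integrable_indicator hK.measurableSet
  have hcont : ContinuousOn Φ (Icc 0 T) := by
    obtain ⟨C2, hC2⟩ := ((isCompact_Icc (a := (0:ℝ)) (b := T)).prod hK).exists_bound_of_continuousOn
      (hcF.continuousOn (s := (Icc (0:ℝ) T) ×ˢ K))
    apply continuousOn_of_dominated (bound := K.indicator fun _ => |C2|)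
    · intro t ht
      exact (hcF.comp (hι t)).aestronglyMeasurable
    · intro t ht
      refine Filter.Eventually.of_forall fun q => ?_
      by_cases hqK : q ∈ K
      · rw [Set.indicator_of_mem hqK]
        exact (hC2 (t, q) ⟨ht, hqK⟩).trans (le_abs_self C2)
      · rw [Set.indicator_of_notMem hqK, hF30 t ht q hqK]
        simp
    · exact (integrableOn_const hK.measure_lt_top.ne).integrable_indicator hK.measurableSet
    · refine Filter.Eventually.of_forall fun q => ?_
      exact (hcF.comp (by fun_prop : Continuous fun s : ℝ => ((s, q.1, q.2) : ℝ×ℝ×ℝ))).continuousOn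
  -- conclude constancy on [0,T]
  have hmid : T/2 ∈ Ioo (0:ℝ) T := ⟨by linarith, by linarith⟩
  have hconst := const_of_hasDerivAt_zero hderiv
  have hend : ∀ e ∈ Icc (0:ℝ) T, e ∈ closure (Ioo (0:ℝ) T) → Φ e = Φ (T/2) := by
    intro e he hecl
    have hne : (nhdsWithin e (Ioo (0:ℝ) T)).NeBot := mem_closure_iff_nhdsWithin_neBot.1 hecl
    have l1 : Filter.Tendsto Φ (nhdsWithin e (Ioo (0:ℝ) T)) (nhds (Φ e)) :=
      (hcont e he).mono_left (nhdsWithin_mono e Ioo_subset_Icc_self)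
    have l2 : Filter.Tendsto Φ (nhdsWithin e (Ioo (0:ℝ) T)) (nhds (Φ (T/2))) := by
      apply Filter.Tendsto.congr' (f₁ := fun _ => Φ (T/2)) ?_ tendsto_const_nhds
      filter_upwards [self_mem_nhdsWithin] with s hs using (hconst s hs (T/2) hmid).symm
    exact tendsto_nhds_unique l1 l2
  have hcl : closure (Ioo (0:ℝ) T) = Icc (0:ℝ) T := closure_Ioo hT.ne
  have h0 : Φ 0 = Φ (T/2) := by
    apply hend 0 (left_mem_Icc.2 hT.le)
    rw [hcl]; exact left_mem_Icc.2 hT.le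
  intro t ht
  show Φ t = Φ 0
  rcases eq_or_lt_of_le ht.1 with h | h
  · rw [← h]
  · rcases eq_or_lt_of_le ht.2 with h2 | h2
    · rw [h2]
      have hTe : Φ T = Φ (T/2) := by
        apply hend T (right_mem_Icc.2 hT.le)
        rw [hcl]; exact right_mem_Icc.2 hT.le
      rw [hTe, ← h0]
    · rw [hconst t ⟨h, h2⟩ (T/2) hmid, ← h0]

end ZakhAux

/-- The energy of the perturbed Zakharov system (written in first-order form with
auxiliary vector field `v`):
`E(t) = ∫ (|∇u|² + |u|² + n²/2 + λ²|v|²/2 - Q²|u|² + n(|u|² + 2 Q Re u)) dx dy`. -/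
noncomputable def energy (lam : ℝ) (u : ℝ → ℝ → ℝ → ℂ) (n : ℝ → ℝ → ℝ → ℝ)
    (v : ℝ → ℝ → ℝ → ℝ × ℝ) (t : ℝ) : ℝ :=
  ∫ p : ℝ × ℝ,
    (‖deriv (fun a => u t a p.2) p.1‖ ^ 2 + ‖deriv (fun b => u t p.1 b) p.2‖ ^ 2
      + ‖u t p.1 p.2‖ ^ 2
      + (n t p.1 p.2) ^ 2 / 2
      + lam ^ 2 * ((v t p.1 p.2).1 ^ 2 + (v t p.1 p.2).2 ^ 2) / 2
      - (Q p.1) ^ 2 * ‖u t p.1 p.2‖ ^ 2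
      + n t p.1 p.2 * (‖u t p.1 p.2‖ ^ 2 + 2 * Q p.1 * (u t p.1 p.2).re))

open ZakhTool ZakhAux

/-- Energy conservation for smooth compactly supported solutions of the perturbed
Zakharov system `i∂ₜu + Δu - u = nu + Qn - Q²u`, `∂ₜn = λ²∇·v`,
`∂ₜv - ∇n = ∇(|u|²) + 2∇(Q Re u)` on `[0, T] × ℝ²`. -/
theorem energy_conservation (lam T : ℝ) (hlam : 0 < lam) (hT : 0 < T)
    (u : ℝ → ℝ → ℝ → ℂ) (n : ℝ → ℝ → ℝ → ℝ) (v : ℝ → ℝ → ℝ → ℝ × ℝ)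
    (hu : ContDiff ℝ 2 fun p : ℝ × ℝ × ℝ => u p.1 p.2.1 p.2.2)
    (hn : ContDiff ℝ 2 fun p : ℝ × ℝ × ℝ => n p.1 p.2.1 p.2.2)
    (hv : ContDiff ℝ 2 fun p : ℝ × ℝ × ℝ => v p.1 p.2.1 p.2.2)
    (K : Set (ℝ × ℝ)) (hK : IsCompact K)
    (hsupp : ∀ t ∈ Set.Icc (0 : ℝ) T, ∀ x y : ℝ, (x, y) ∉ K →
      u t x y = 0 ∧ n t x y = 0 ∧ v t x y = 0)
    (heq1 : ∀ t ∈ Set.Icc (0 : ℝ) T, ∀ x y : ℝ,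
      Complex.I * deriv (fun s => u s x y) t
          + (deriv (deriv fun a => u t a y) x + deriv (deriv fun b => u t x b) y)
          - u t x y
        = (n t x y : ℂ) * u t x y + (Q x : ℂ) * (n t x y : ℂ)
            - ((Q x) ^ 2 : ℝ) * u t x y)
    (heq2 : ∀ t ∈ Set.Icc (0 : ℝ) T, ∀ x y : ℝ,
      deriv (fun s => n s x y) t
        = lam ^ 2 * (deriv (fun a => (v t a y).1) x + deriv (fun b => (v t x b).2) y))
    (heq3 : ∀ t ∈ Set.Icc (0 : ℝ) T, ∀ x y : ℝ,
      (deriv (fun s => (v s x y).1) t - deriv (fun a => n t a y) x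
          = deriv (fun a => ‖u t a y‖ ^ 2) x + 2 * deriv (fun a => Q a * (u t a y).re) x)
      ∧ (deriv (fun s => (v s x y).2) t - deriv (fun b => n t x b) y
          = deriv (fun b => ‖u t x b‖ ^ 2) y
            + 2 * deriv (fun b => Q x * (u t x b).re) y)) :
    ∀ t ∈ Set.Icc (0 : ℝ) T, energy lam u n v t = energy lam u n v 0 := by
  have hWd : Differentiable ℝ (fun p : ℝ × ℝ × ℝ => u p.1 p.2.1 p.2.2) :=
    hu.differentiable two_ne_zero
  have haa : ContDiff ℝ 2 (fun p : ℝ × ℝ × ℝ => (u p.1 p.2.1 p.2.2).re) :=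
    Complex.reCLM.contDiff.comp hu
  have hbb : ContDiff ℝ 2 (fun p : ℝ × ℝ × ℝ => (u p.1 p.2.1 p.2.2).im) :=
    Complex.imCLM.contDiff.comp hu
  have hnn : ContDiff ℝ 2 (fun p : ℝ × ℝ × ℝ => n p.1 p.2.1 p.2.2) := hn
  have hv1 : ContDiff ℝ 2 (fun p : ℝ × ℝ × ℝ => (v p.1 p.2.1 p.2.2).1) :=
    (ContinuousLinearMap.fst ℝ ℝ ℝ).contDiff.comp hv
  have hv2 : ContDiff ℝ 2 (fun p : ℝ × ℝ × ℝ => (v p.1 p.2.1 p.2.2).2) :=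
    (ContinuousLinearMap.snd ℝ ℝ ℝ).contDiff.comp hv
  -- component identities for directional derivatives
  have hDre : ∀ (w p : ℝ × ℝ × ℝ),
      D w (fun p : ℝ × ℝ × ℝ => (u p.1 p.2.1 p.2.2).re) p
        = (D w (fun p : ℝ × ℝ × ℝ => u p.1 p.2.1 p.2.2) p).re :=
    fun w p => D_comp_clm Complex.reCLM hWd w p
  have hDim : ∀ (w p : ℝ × ℝ × ℝ),
      D w (fun p : ℝ × ℝ × ℝ => (u p.1 p.2.1 p.2.2).im) p
        = (D w (fun p : ℝ × ℝ × ℝ => u p.1 p.2.1 p.2.2) p).im :=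
    fun w p => D_comp_clm Complex.imCLM hWd w p
  have hDDre : ∀ (w w' p : ℝ × ℝ × ℝ),
      D w' (D w (fun p : ℝ × ℝ × ℝ => (u p.1 p.2.1 p.2.2).re)) p
        = (D w' (D w (fun p : ℝ × ℝ × ℝ => u p.1 p.2.1 p.2.2)) p).re := by
    intro w w' p
    have h1 : D w (fun p : ℝ × ℝ × ℝ => (u p.1 p.2.1 p.2.2).re)
        = fun q => (D w (fun p : ℝ × ℝ × ℝ => u p.1 p.2.1 p.2.2) q).re :=
      funext fun q => hDre w q
    rw [h1]
    exact D_comp_clm Complex.reCLM ((contDiff_D hu w).differentiable one_ne_zero) w' p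
  have hDDim : ∀ (w w' p : ℝ × ℝ × ℝ),
      D w' (D w (fun p : ℝ × ℝ × ℝ => (u p.1 p.2.1 p.2.2).im)) p
        = (D w' (D w (fun p : ℝ × ℝ × ℝ => u p.1 p.2.1 p.2.2)) p).im := by
    intro w w' p
    have h1 : D w (fun p : ℝ × ℝ × ℝ => (u p.1 p.2.1 p.2.2).im)
        = fun q => (D w (fun p : ℝ × ℝ × ℝ => u p.1 p.2.1 p.2.2) q).im :=
      funext fun q => hDim w q
    rw [h1]
    exact D_comp_clm Complex.imCLM ((contDiff_D hu w).differentiable one_ne_zero) w' p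
  have hnormsq : ∀ z : ℂ, ‖z‖^2 = z.re^2 + z.im^2 := fun z => by
    rw [Complex.sq_norm, Complex.normSq_apply]; ring
  -- support hypothesis in component form
  have hsupp' : ∀ t ∈ Set.Icc (0:ℝ) T, ∀ x y : ℝ, (x,y) ∉ K →
      (u t x y).re = 0 ∧ (u t x y).im = 0 ∧ n t x y = 0 ∧ (v t x y).1 = 0 ∧ (v t x y).2 = 0 := by
    intro t ht x y hxy
    obtain ⟨h1, h2, h3⟩ := hsupp t ht x y hxy
    refine ⟨by rw [h1]; simp, by rw [h1]; simp, h2, by rw [h3]; rfl, by rw [h3]; rfl⟩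
  -- PDE hypotheses in component form
  have hEA : ∀ t ∈ Set.Icc (0:ℝ) T, ∀ x y : ℝ,
      - D (1,0,0) (fun p : ℝ×ℝ×ℝ => (u p.1 p.2.1 p.2.2).im) (t,x,y)
        + (D (0,1,0) (D (0,1,0) (fun p : ℝ×ℝ×ℝ => (u p.1 p.2.1 p.2.2).re)) (t,x,y)
          + D (0,0,1) (D (0,0,1) (fun p : ℝ×ℝ×ℝ => (u p.1 p.2.1 p.2.2).re)) (t,x,y))
        - (u t x y).re
      = n t x y * (u t x y).re + Q x * n t x y - (Q x)^2 * (u t x y).re := by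
    intro t ht x y
    have h1 := heq1 t ht x y
    have c1 : deriv (fun s => u s x y) t
        = D (1,0,0) (fun p : ℝ×ℝ×ℝ => u p.1 p.2.1 p.2.2) (t,x,y) :=
      (hasDerivAt_T (hWd _)).deriv
    have c2 : (deriv fun a => u t a y)
        = fun a => D (0,1,0) (fun p : ℝ×ℝ×ℝ => u p.1 p.2.1 p.2.2) (t,a,y) :=
      funext fun a' => (hasDerivAt_X (hWd _)).deriv
    have c3 : deriv (fun a => D (0,1,0) (fun p : ℝ×ℝ×ℝ => u p.1 p.2.1 p.2.2) (t,a,y)) x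
        = D (0,1,0) (D (0,1,0) (fun p : ℝ×ℝ×ℝ => u p.1 p.2.1 p.2.2)) (t,x,y) :=
      (hasDerivAt_X (((contDiff_D hu _).differentiable one_ne_zero) _)).deriv
    have c4 : (deriv fun b => u t x b)
        = fun b => D (0,0,1) (fun p : ℝ×ℝ×ℝ => u p.1 p.2.1 p.2.2) (t,x,b) :=
      funext fun b' => (hasDerivAt_Y (hWd _)).deriv
    have c5 : deriv (fun b => D (0,0,1) (fun p : ℝ×ℝ×ℝ => u p.1 p.2.1 p.2.2) (t,x,b)) y
        = D (0,0,1) (D (0,0,1) (fun p : ℝ×ℝ×ℝ => u p.1 p.2.1 p.2.2)) (t,x,y) :=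
      (hasDerivAt_Y (((contDiff_D hu _).differentiable one_ne_zero) _)).deriv
    rw [c1, c2, c3, c4, c5, Complex.ext_iff] at h1
    obtain ⟨h1re, _⟩ := h1
    simp only [Complex.add_re, Complex.sub_re, Complex.mul_re, Complex.I_re, Complex.I_im,
      Complex.ofReal_re, Complex.ofReal_im, zero_mul, one_mul, mul_zero, zero_sub, sub_zero,
      mul_one, zero_add, add_zero, neg_zero] at h1re
    simp only [hDre, hDim, hDDre, hDDim]
    linear_combination h1re
  have hEB : ∀ t ∈ Set.Icc (0:ℝ) T, ∀ x y : ℝ,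
      D (1,0,0) (fun p : ℝ×ℝ×ℝ => (u p.1 p.2.1 p.2.2).re) (t,x,y)
        + (D (0,1,0) (D (0,1,0) (fun p : ℝ×ℝ×ℝ => (u p.1 p.2.1 p.2.2).im)) (t,x,y)
          + D (0,0,1) (D (0,0,1) (fun p : ℝ×ℝ×ℝ => (u p.1 p.2.1 p.2.2).im)) (t,x,y))
        - (u t x y).im
      = n t x y * (u t x y).im - (Q x)^2 * (u t x y).im := by
    intro t ht x y
    have h1 := heq1 t ht x y
    have c1 : deriv (fun s => u s x y) t
        = D (1,0,0) (fun p : ℝ×ℝ×ℝ => u p.1 p.2.1 p.2.2) (t,x,y) :=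
      (hasDerivAt_T (hWd _)).deriv
    have c2 : (deriv fun a => u t a y)
        = fun a => D (0,1,0) (fun p : ℝ×ℝ×ℝ => u p.1 p.2.1 p.2.2) (t,a,y) :=
      funext fun a' => (hasDerivAt_X (hWd _)).deriv
    have c3 : deriv (fun a => D (0,1,0) (fun p : ℝ×ℝ×ℝ => u p.1 p.2.1 p.2.2) (t,a,y)) x
        = D (0,1,0) (D (0,1,0) (fun p : ℝ×ℝ×ℝ => u p.1 p.2.1 p.2.2)) (t,x,y) :=
      (hasDerivAt_X (((contDiff_D hu _).differentiable one_ne_zero) _)).deriv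
    have c4 : (deriv fun b => u t x b)
        = fun b => D (0,0,1) (fun p : ℝ×ℝ×ℝ => u p.1 p.2.1 p.2.2) (t,x,b) :=
      funext fun b' => (hasDerivAt_Y (hWd _)).deriv
    have c5 : deriv (fun b => D (0,0,1) (fun p : ℝ×ℝ×ℝ => u p.1 p.2.1 p.2.2) (t,x,b)) y
        = D (0,0,1) (D (0,0,1) (fun p : ℝ×ℝ×ℝ => u p.1 p.2.1 p.2.2)) (t,x,y) :=
      (hasDerivAt_Y (((contDiff_D hu _).differentiable one_ne_zero) _)).deriv
    rw [c1, c2, c3, c4, c5, Complex.ext_iff] at h1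
    obtain ⟨_, h1im⟩ := h1
    simp only [Complex.add_im, Complex.sub_im, Complex.mul_im, Complex.I_re, Complex.I_im,
      Complex.ofReal_re, Complex.ofReal_im, zero_mul, one_mul, mul_zero, zero_sub, sub_zero,
      mul_one, zero_add, add_zero, neg_zero] at h1im
    simp only [hDre, hDim, hDDre, hDDim]
    linear_combination h1im
  have hE2 : ∀ t ∈ Set.Icc (0:ℝ) T, ∀ x y : ℝ,
      D (1,0,0) (fun p : ℝ×ℝ×ℝ => n p.1 p.2.1 p.2.2) (t,x,y)
        = lam^2 * (D (0,1,0) (fun p : ℝ×ℝ×ℝ => (v p.1 p.2.1 p.2.2).1) (t,x,y)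
          + D (0,0,1) (fun p : ℝ×ℝ×ℝ => (v p.1 p.2.1 p.2.2).2) (t,x,y)) := by
    intro t ht x y
    have h2 := heq2 t ht x y
    have c1 : deriv (fun s => n s x y) t
        = D (1,0,0) (fun p : ℝ×ℝ×ℝ => n p.1 p.2.1 p.2.2) (t,x,y) :=
      (hasDerivAt_T ((hnn.differentiable two_ne_zero) _)).deriv
    have c2 : deriv (fun a => (v t a y).1) x
        = D (0,1,0) (fun p : ℝ×ℝ×ℝ => (v p.1 p.2.1 p.2.2).1) (t,x,y) :=
      (hasDerivAt_X ((hv1.differentiable two_ne_zero) _)).deriv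
    have c3 : deriv (fun b => (v t x b).2) y
        = D (0,0,1) (fun p : ℝ×ℝ×ℝ => (v p.1 p.2.1 p.2.2).2) (t,x,y) :=
      (hasDerivAt_Y ((hv2.differentiable two_ne_zero) _)).deriv
    rw [c1, c2, c3] at h2
    exact h2
  have hE3a : ∀ t ∈ Set.Icc (0:ℝ) T, ∀ x y : ℝ,
      D (1,0,0) (fun p : ℝ×ℝ×ℝ => (v p.1 p.2.1 p.2.2).1) (t,x,y)
        - D (0,1,0) (fun p : ℝ×ℝ×ℝ => n p.1 p.2.1 p.2.2) (t,x,y)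
      = (2*(u t x y).re*D (0,1,0) (fun p : ℝ×ℝ×ℝ => (u p.1 p.2.1 p.2.2).re) (t,x,y)
          + 2*(u t x y).im*D (0,1,0) (fun p : ℝ×ℝ×ℝ => (u p.1 p.2.1 p.2.2).im) (t,x,y))
        + 2*(deriv Q x*(u t x y).re
          + Q x*D (0,1,0) (fun p : ℝ×ℝ×ℝ => (u p.1 p.2.1 p.2.2).re) (t,x,y)) := by
    intro t ht x y
    have h3 := (heq3 t ht x y).1
    have c1 : deriv (fun s => (v s x y).1) t
        = D (1,0,0) (fun p : ℝ×ℝ×ℝ => (v p.1 p.2.1 p.2.2).1) (t,x,y) :=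
      (hasDerivAt_T ((hv1.differentiable two_ne_zero) _)).deriv
    have c2 : deriv (fun a => n t a y) x
        = D (0,1,0) (fun p : ℝ×ℝ×ℝ => n p.1 p.2.1 p.2.2) (t,x,y) :=
      (hasDerivAt_X ((hnn.differentiable two_ne_zero) _)).deriv
    have hXa : HasDerivAt (fun a => (u t a y).re)
        (D (0,1,0) (fun p : ℝ×ℝ×ℝ => (u p.1 p.2.1 p.2.2).re) (t,x,y)) x :=
      hasDerivAt_X ((haa.differentiable two_ne_zero) _)
    have hXb : HasDerivAt (fun a => (u t a y).im)
        (D (0,1,0) (fun p : ℝ×ℝ×ℝ => (u p.1 p.2.1 p.2.2).im) (t,x,y)) x :=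
      hasDerivAt_X ((hbb.differentiable two_ne_zero) _)
    have hnormfun : (fun a => ‖u t a y‖^2) = fun a => (u t a y).re^2 + (u t a y).im^2 :=
      funext fun a' => hnormsq _
    have R1 : deriv (fun a => (u t a y).re^2 + (u t a y).im^2) x = _ := ((hXa.pow 2).add (hXb.pow 2)).deriv
    have hQx : HasDerivAt Q (deriv Q x) x :=
      ((contDiff_Q.differentiable one_ne_zero) x).hasDerivAt
    have R2 : deriv (fun a => Q a * (u t a y).re) x = _ := (hQx.mul hXa).deriv
    rw [c1, c2, hnormfun, R1, R2] at h3
    linear_combination h3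
  have hE3b : ∀ t ∈ Set.Icc (0:ℝ) T, ∀ x y : ℝ,
      D (1,0,0) (fun p : ℝ×ℝ×ℝ => (v p.1 p.2.1 p.2.2).2) (t,x,y)
        - D (0,0,1) (fun p : ℝ×ℝ×ℝ => n p.1 p.2.1 p.2.2) (t,x,y)
      = (2*(u t x y).re*D (0,0,1) (fun p : ℝ×ℝ×ℝ => (u p.1 p.2.1 p.2.2).re) (t,x,y)
          + 2*(u t x y).im*D (0,0,1) (fun p : ℝ×ℝ×ℝ => (u p.1 p.2.1 p.2.2).im) (t,x,y))
        + 2*(Q x*D (0,0,1) (fun p : ℝ×ℝ×ℝ => (u p.1 p.2.1 p.2.2).re) (t,x,y)) := by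
    intro t ht x y
    have h3 := (heq3 t ht x y).2
    have c1 : deriv (fun s => (v s x y).2) t
        = D (1,0,0) (fun p : ℝ×ℝ×ℝ => (v p.1 p.2.1 p.2.2).2) (t,x,y) :=
      (hasDerivAt_T ((hv2.differentiable two_ne_zero) _)).deriv
    have c2 : deriv (fun b => n t x b) y
        = D (0,0,1) (fun p : ℝ×ℝ×ℝ => n p.1 p.2.1 p.2.2) (t,x,y) :=
      (hasDerivAt_Y ((hnn.differentiable two_ne_zero) _)).deriv
    have hYa : HasDerivAt (fun b => (u t x b).re)
        (D (0,0,1) (fun p : ℝ×ℝ×ℝ => (u p.1 p.2.1 p.2.2).re) (t,x,y)) y :=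
      hasDerivAt_Y ((haa.differentiable two_ne_zero) _)
    have hYb : HasDerivAt (fun b => (u t x b).im)
        (D (0,0,1) (fun p : ℝ×ℝ×ℝ => (u p.1 p.2.1 p.2.2).im) (t,x,y)) y :=
      hasDerivAt_Y ((hbb.differentiable two_ne_zero) _)
    have hnormfun : (fun b => ‖u t x b‖^2) = fun b => (u t x b).re^2 + (u t x b).im^2 :=
      funext fun b' => hnormsq _
    have R1 : deriv (fun b => (u t x b).re^2 + (u t x b).im^2) y = _ := ((hYa.pow 2).add (hYb.pow 2)).deriv
    have R2 : deriv (fun b => Q x * (u t x b).re) y = _ := ((hasDerivAt_const y (Q x)).mul hYa).deriv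
    rw [c1, c2, hnormfun, R1, R2] at h3
    linear_combination h3
  have energy_eq : ∀ s : ℝ, energy lam u n v s
      = ∫ q : ℝ × ℝ, F3 lam (fun p : ℝ×ℝ×ℝ => (u p.1 p.2.1 p.2.2).re)
          (fun p : ℝ×ℝ×ℝ => (u p.1 p.2.1 p.2.2).im) (fun p : ℝ×ℝ×ℝ => n p.1 p.2.1 p.2.2)
          (fun p : ℝ×ℝ×ℝ => (v p.1 p.2.1 p.2.2).1) (fun p : ℝ×ℝ×ℝ => (v p.1 p.2.1 p.2.2).2)
          (s,q.1,q.2) := by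
    intro s
    unfold energy
    refine congrArg (integral volume) (funext fun q => ?_)
    obtain ⟨x, y⟩ := q
    have d1 : deriv (fun a => u s a y) x
        = D (0,1,0) (fun p : ℝ×ℝ×ℝ => u p.1 p.2.1 p.2.2) (s,x,y) :=
      (hasDerivAt_X (hWd _)).deriv
    have d2 : deriv (fun b => u s x b) y
        = D (0,0,1) (fun p : ℝ×ℝ×ℝ => u p.1 p.2.1 p.2.2) (s,x,y) :=
      (hasDerivAt_Y (hWd _)).deriv
    show _ = F3 lam _ _ _ _ _ (s,x,y)
    simp only [F3, d1, d2, hnormsq, hDre, hDim]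
    ring
  intro t ht
  rw [energy_eq t, energy_eq 0]
  exact main_aux lam T hT haa hbb hnn hv1 hv2 K hK hsupp' hEA hEB hE2 hE3a hE3b t ht
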